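/- arXiv:1903.12445 — 3 statements merged into one kernel-verified Lean document; each statement's English description precedes it below -/
import Mathlib

section
/- Let η > 1 be the real number satisfying (1 − 2^{-η}) ζ(η) = 2, where ζ is the Riemann zeta function (η = 1.37779…). Then for every odd integer n ≥ 3, the number of ordered factorizations H(n) satisfies H(n) ≤ n^η. -/
/-!
Removing the first factor `d` of an ordered factorization of `n` gives the recursion
`H(n) = ∑_{d ∣ n, d > 1} H(n / d)`. All divisors of an odd `n` are odd, so by strong induction
`H(n) ≤ n^η ∑_{d ∣ n, d > 1} d^(-η) ≤ n^η ∑_{m ≥ 3 odd} m^(-η) = n^η ((1 - 2^(-η)) ζ(η) - 1) ≤ n^η`.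
-/

/-- `Hfac n` is the number of ordered factorizations of `n`, i.e. the number of finite
sequences `(d_1, …, d_k)` with each `d_i ≥ 2` and product `n`. -/
noncomputable def Hfac (n : ℕ) : ℕ :=
  Nat.card {l : List ℕ // (∀ d ∈ l, 2 ≤ d) ∧ l.prod = n}

lemma List.finite_setOf_length_le_forall_mem {α : Type*} {s : Set α} (hs : s.Finite) (k : ℕ) :
    {l : List α | l.length ≤ k ∧ ∀ x ∈ l, x ∈ s}.Finite := by
  have := hs.to_subtype
  refine ((List.finite_length_le s k).image (List.map Subtype.val)).subset ?_
  rintro l ⟨hlen, hmem⟩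
  lift l to List s using hmem
  exact ⟨l, by simpa using hlen, rfl⟩

def orderedFactorizations (n : ℕ) : Set (List ℕ) :=
  {l | (∀ d ∈ l, 2 ≤ d) ∧ l.prod = n}

lemma Hfac_eq_card (n : ℕ) : Hfac n = Nat.card (orderedFactorizations n) := rfl

lemma orderedFactorizations_finite {n : ℕ} (hn : n ≠ 0) : (orderedFactorizations n).Finite := by
  refine (List.finite_setOf_length_le_forall_mem (Set.finite_Iic n) n).subset ?_
  rintro l ⟨h2, rfl⟩
  refine ⟨?_, fun d hd => Nat.le_of_dvd (Nat.pos_of_ne_zero hn) (List.dvd_prod hd)⟩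
  exact (Nat.lt_two_pow_self.trans_le (List.pow_card_le_prod l 2 h2)).le

lemma orderedFactorizations_one : orderedFactorizations 1 = {[]} := by
  ext l
  refine ⟨fun ⟨h2, hl⟩ => ?_, by rintro rfl; simp [orderedFactorizations]⟩
  cases l with
  | nil => rfl
  | cons a t =>
    have ha : a ∣ 1 := hl ▸ List.dvd_prod List.mem_cons_self
    have := h2 a List.mem_cons_self
    simp_all

lemma Hfac_one : Hfac 1 = 1 := by
  rw [Hfac_eq_card, orderedFactorizations_one, Nat.card_unique]

lemma two_le_of_mem_divisors_erase_one {n d : ℕ} (hd : d ∈ n.divisors.erase 1) : 2 ≤ d := by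
  obtain ⟨hd1, hdvd, hn⟩ : d ≠ 1 ∧ d ∣ n ∧ n ≠ 0 := by simpa using hd
  have : d ≠ 0 := by rintro rfl; exact hn (zero_dvd_iff.mp hdvd)
  omega

noncomputable def orderedFactorizationsConsEquiv {n : ℕ} (hn : 2 ≤ n) :
    (Σ d : n.divisors.erase 1, orderedFactorizations (n / d)) ≃ orderedFactorizations n := by
  refine Equiv.ofBijective (fun x => ⟨x.1.1 :: x.2.1, ?_, ?_⟩) ⟨?_, ?_⟩
  · exact List.forall_mem_cons.mpr ⟨two_le_of_mem_divisors_erase_one x.1.2, x.2.2.1⟩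
  · rw [List.prod_cons, x.2.2.2]
    exact Nat.mul_div_cancel' (Nat.dvd_of_mem_divisors (Finset.mem_of_mem_erase x.1.2))
  · rintro ⟨⟨d, _⟩, ⟨l, _⟩⟩ ⟨⟨d', _⟩, ⟨l', _⟩⟩ h
    obtain ⟨rfl, rfl⟩ := List.cons_eq_cons.mp (congrArg Subtype.val h)
    rfl
  · rintro ⟨_ | ⟨d, l⟩, h2, hp⟩
    · simp only [List.prod_nil] at hp; omega
    · rw [List.prod_cons] at hp
      subst hp
      have hd2 : 2 ≤ d := h2 d List.mem_cons_self
      have hd : d ∈ (d * l.prod).divisors.erase 1 :=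
        Finset.mem_erase.mpr ⟨by omega, Nat.mem_divisors.mpr ⟨dvd_mul_right d _, by omega⟩⟩
      refine ⟨⟨⟨d, hd⟩, ⟨l, fun e he => h2 e (List.mem_cons_of_mem d he), ?_⟩⟩, rfl⟩
      exact (Nat.mul_div_cancel_left _ (by omega)).symm

lemma Hfac_eq_sum_divisors_erase_one {n : ℕ} (hn : 2 ≤ n) :
    Hfac n = ∑ d ∈ n.divisors.erase 1, Hfac (n / d) := by
  have (d : n.divisors.erase 1) : Finite (orderedFactorizations (n / d)) := by
    refine (orderedFactorizations_finite ?_).to_subtype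
    exact (Nat.div_pos (Nat.divisor_le (Finset.mem_of_mem_erase d.2))
      (Nat.pos_of_mem_divisors (Finset.mem_of_mem_erase d.2))).ne'
  rw [Hfac_eq_card, ← Nat.card_congr (orderedFactorizationsConsEquiv hn), Nat.card_sigma]
  exact Finset.sum_coe_sort _ (fun d => Hfac (n / d))

lemma injective_two_mul_add_one : (fun k : ℕ => 2 * k + 1).Injective :=
  fun a b h => by simpa using h

lemma tsum_odd_rpow_neg {s : ℝ} (hs : 1 < s) :
    ∑' k : ℕ, ((2 * k + 1 : ℕ) : ℝ) ^ (-s) = (1 - 2 ^ (-s)) * ∑' m : ℕ, (m : ℝ) ^ (-s) := by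
  have hsum : Summable (fun m : ℕ => (m : ℝ) ^ (-s)) := Real.summable_nat_rpow.mpr (by linarith)
  have heven : ∑' k : ℕ, ((2 * k : ℕ) : ℝ) ^ (-s) = 2 ^ (-s) * ∑' m : ℕ, (m : ℝ) ^ (-s) := by
    rw [← tsum_mul_left]
    congr 1 with k
    push_cast
    exact Real.mul_rpow zero_le_two k.cast_nonneg
  have hsplit : ∑' k : ℕ, ((2 * k : ℕ) : ℝ) ^ (-s) + ∑' k : ℕ, ((2 * k + 1 : ℕ) : ℝ) ^ (-s) =
      ∑' m : ℕ, (m : ℝ) ^ (-s) :=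
    tsum_even_add_odd (f := fun m : ℕ => (m : ℝ) ^ (-s))
      (hsum.comp_injective (mul_right_injective₀ two_ne_zero))
      (hsum.comp_injective injective_two_mul_add_one)
  rw [heven] at hsplit
  rw [one_sub_mul]
  exact eq_sub_of_add_eq' hsplit

lemma sum_divisors_rpow_neg_le_of_odd {s : ℝ} (hs : 1 < s) {n : ℕ} (hn : Odd n) :
    ∑ d ∈ n.divisors, (d : ℝ) ^ (-s) ≤ (1 - 2 ^ (-s)) * ∑' m : ℕ, (m : ℝ) ^ (-s) := by
  set f := {m : ℕ | Odd m}.indicator (fun m : ℕ => (m : ℝ) ^ (-s))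
  have hf : Summable f := (Real.summable_nat_rpow.mpr (by linarith)).indicator _
  have hodd : ∑' m, f m = ∑' k : ℕ, ((2 * k + 1 : ℕ) : ℝ) ^ (-s) := by
    rw [← injective_two_mul_add_one.tsum_eq]
    · congr 1 with k
      exact Set.indicator_of_mem (s := {m : ℕ | Odd m}) (odd_two_mul_add_one k) _
    · intro m hm
      obtain ⟨k, rfl⟩ : Odd m := by_contra fun h => hm (Set.indicator_of_notMem (s := {m : ℕ | Odd m}) h _)
      exact ⟨k, rfl⟩
  calc ∑ d ∈ n.divisors, (d : ℝ) ^ (-s) = ∑ d ∈ n.divisors, f d := by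
        refine Finset.sum_congr rfl fun d hd => ?_
        have hd : d ∈ {m : ℕ | Odd m} := hn.of_dvd_nat (Nat.dvd_of_mem_divisors hd)
        exact (Set.indicator_of_mem hd fun m : ℕ => (m : ℝ) ^ (-s)).symm
    _ ≤ ∑' m, f m := hf.sum_le_tsum _ fun m _ => Set.indicator_nonneg (fun m _ => by positivity) m
    _ = _ := by rw [hodd, tsum_odd_rpow_neg hs]

theorem Hfac_le_rpow_of_odd {η : ℝ} (hη : 1 < η)
    (hzeta : (1 - 2 ^ (-η)) * ∑' m : ℕ, (m : ℝ) ^ (-η) ≤ 2) {n : ℕ} (hn : Odd n) :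
    (Hfac n : ℝ) ≤ (n : ℝ) ^ η := by
  induction n using Nat.strong_induction_on with
  | _ n ih =>
  obtain rfl | hn2 : n = 1 ∨ 2 ≤ n := by obtain ⟨k, rfl⟩ := hn; omega
  · simp [Hfac_one]
  have hdiv : ∑ d ∈ n.divisors.erase 1, (d : ℝ) ^ (-η) ≤ 1 := by
    have := (sum_divisors_rpow_neg_le_of_odd hη hn).trans hzeta
    rw [← Finset.sum_erase_add _ _ (Nat.one_mem_divisors.mpr (by omega))] at this
    simp only [Nat.cast_one, Real.one_rpow] at this
    linarith
  have hterm (d) (hd : d ∈ n.divisors.erase 1) : (Hfac (n / d) : ℝ) ≤ n ^ η * d ^ (-η) := by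
    have hdvd := Nat.dvd_of_mem_divisors (Finset.mem_of_mem_erase hd)
    have hd2 := two_le_of_mem_divisors_erase_one hd
    calc (Hfac (n / d) : ℝ) ≤ ((n / d : ℕ) : ℝ) ^ η :=
          ih _ (Nat.div_lt_self (by omega) hd2) (hn.of_dvd_nat (Nat.div_dvd_of_dvd hdvd))
      _ = n ^ η * d ^ (-η) := by
          rw [Nat.cast_div hdvd (by positivity), Real.div_rpow (by positivity) (by positivity),
            Real.rpow_neg (by positivity), div_eq_mul_inv]
  calc (Hfac n : ℝ) = ∑ d ∈ n.divisors.erase 1, (Hfac (n / d) : ℝ) := by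
        rw [Hfac_eq_sum_divisors_erase_one hn2, Nat.cast_sum]
    _ ≤ ∑ d ∈ n.divisors.erase 1, (n : ℝ) ^ η * (d : ℝ) ^ (-η) := Finset.sum_le_sum hterm
    _ = n ^ η * ∑ d ∈ n.divisors.erase 1, (d : ℝ) ^ (-η) := (Finset.mul_sum ..).symm
    _ ≤ n ^ η := mul_le_of_le_one_right (by positivity) hdiv

theorem stmt3 (η : ℝ) (hη : 1 < η)
    (hzeta : (1 - (2 : ℝ) ^ (-η)) * ∑' m : ℕ, (m : ℝ) ^ (-η) = 2) :
    ∀ n : ℕ, 3 ≤ n → Odd n → (Hfac n : ℝ) ≤ (n : ℝ) ^ η :=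
  fun _ _ hn => Hfac_le_rpow_of_odd hη hzeta.le hn
end

section
/- Let f : ℕ → ℝ be a multiplicative arithmetic function with f(1) = 1. Assume there exist C > 0 and γ ∈ ℝ such that |f(n)| ≤ C n^γ for all n ≥ 2. Then for all n ≥ 2, the Dirichlet inverse satisfies |f⁻¹(n)| ≤ n^{γ + ln(1+C)/ln 2}. -/
/-!
The Dirichlet inverse `g` of a multiplicative `f` is again multiplicative, so it suffices to bound
it on prime powers. For a fixed prime `p`, the identity `f * g = ε` at `p ^ k` is the recursion
`g(p^k) = -∑_{j<k} f(p^(k-j)) g(p^j)`, and induction with `|f(p^i)| ≤ C (p^γ)^i` gives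
`|g(p^k)| ≤ (p^γ (1 + C))^k`, the sum over `j` being a geometric series in `1 + C`.
Finally `1 + C = 2^β ≤ p^β` for `β = log (1 + C) / log 2`.
-/

open Finset ArithmeticFunction

theorem abs_le_pow_of_sum_mul_eq_zero {a w : ℕ → ℝ} {C x : ℝ} (hC : 0 ≤ C) (hx : 0 ≤ x)
    (ha0 : a 0 = 1) (ha : ∀ i, i ≠ 0 → |a i| ≤ C * x ^ i) (hw0 : |w 0| ≤ 1)
    (hw : ∀ k, k ≠ 0 → ∑ j ∈ range (k + 1), a (k - j) * w j = 0) (k : ℕ) :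
    |w k| ≤ (x * (1 + C)) ^ k := by
  induction k using Nat.strong_induction_on with | _ k ih => ?_
  rcases k with _ | k
  · simpa using hw0
  have hrec : w (k + 1) = -∑ j ∈ range (k + 1), a (k + 1 - j) * w j := by
    have := hw (k + 1) k.succ_ne_zero
    rw [sum_range_succ, Nat.sub_self, ha0, one_mul] at this
    linarith
  have hterm : ∀ j ∈ range (k + 1),
      |a (k + 1 - j) * w j| ≤ C * x ^ (k + 1) * (1 + C) ^ j := by
    intro j hj
    have hjk := mem_range.mp hj
    calc |a (k + 1 - j) * w j|
        ≤ C * x ^ (k + 1 - j) * (x * (1 + C)) ^ j := by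
          rw [abs_mul]
          exact mul_le_mul (ha _ (by omega)) (ih j (by omega)) (abs_nonneg _) (by positivity)
      _ = C * x ^ (k + 1) * (1 + C) ^ j := by
          rw [mul_pow, ← mul_assoc, mul_assoc C, ← pow_add, Nat.sub_add_cancel hjk.le]
  have hgeom : C * ∑ j ∈ range (k + 1), (1 + C) ^ j = (1 + C) ^ (k + 1) - 1 := by
    have := geom_sum_mul (1 + C) (k + 1)
    rw [add_sub_cancel_left] at this
    rw [mul_comm, this]
  calc |w (k + 1)| ≤ ∑ j ∈ range (k + 1), |a (k + 1 - j) * w j| := by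
        rw [hrec, abs_neg]; exact abs_sum_le_sum_abs _ _
    _ ≤ ∑ j ∈ range (k + 1), C * x ^ (k + 1) * (1 + C) ^ j := sum_le_sum hterm
    _ = x ^ (k + 1) * ((1 + C) ^ (k + 1) - 1) := by rw [← mul_sum, ← hgeom]; ring
    _ ≤ (x * (1 + C)) ^ (k + 1) := by
        rw [mul_pow]
        nlinarith [pow_nonneg hx (k + 1)]

theorem Real.le_rpow_logb_two {y p : ℝ} (hy : 1 ≤ y) (hp : 2 ≤ p) : y ≤ p ^ Real.logb 2 y :=
  calc y = 2 ^ Real.logb 2 y := (Real.rpow_logb two_pos (by norm_num) (by linarith)).symm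
    _ ≤ p ^ Real.logb 2 y :=
        Real.rpow_le_rpow zero_le_two hp (Real.logb_nonneg one_lt_two hy)

namespace ArithmeticFunction

variable {R : Type*}

def ofFun [Zero R] (f : ℕ → R) : ArithmeticFunction R :=
  ⟨fun n => if n = 0 then 0 else f n, if_pos rfl⟩

theorem ofFun_apply [Zero R] (f : ℕ → R) {n : ℕ} (hn : n ≠ 0) : ofFun f n = f n :=
  if_neg hn

theorem ofFun_mul_ofFun_apply [Semiring R] (f g : ℕ → R) {n : ℕ} (hn : n ≠ 0) :
    (ofFun f * ofFun g) n = ∑ d ∈ n.divisors, f (n / d) * g d := by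
  rw [mul_apply, Nat.sum_divisorsAntidiagonal' (f := fun a b => ofFun f a * ofFun g b)]
  refine sum_congr rfl fun d hd => ?_
  obtain ⟨hdn, -⟩ := Nat.mem_divisors.mp hd
  rw [ofFun_apply _ (Nat.div_ne_zero_iff_of_dvd hdn |>.mpr ⟨hn, ne_zero_of_dvd_ne_zero hn hdn⟩),
    ofFun_apply _ (ne_zero_of_dvd_ne_zero hn hdn)]

theorem mul_apply_prime_pow [Semiring R] (f g : ArithmeticFunction R) {p : ℕ} (hp : p.Prime)
    (k : ℕ) : (f * g) (p ^ k) = ∑ j ∈ range (k + 1), f (p ^ (k - j)) * g (p ^ j) := by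
  rw [mul_apply, Nat.sum_divisorsAntidiagonal' (f := fun a b => f a * g b),
    Nat.sum_divisors_prime_pow hp]
  refine sum_congr rfl fun j hj => ?_
  rw [Nat.pow_div (Nat.lt_succ_iff.mp (mem_range.mp hj)) hp.pos]

theorem isMultiplicative_ofFun_factorization_prod [CommMonoidWithZero R] (g : ℕ → R) :
    (ofFun fun n => n.factorization.prod fun p k => g (p ^ k)).IsMultiplicative := by
  refine IsMultiplicative.iff_ne_zero.mpr ⟨by simp [ofFun_apply], fun {m n} hm hn hmn => ?_⟩
  rw [ofFun_apply _ (mul_ne_zero hm hn), ofFun_apply _ hm, ofFun_apply _ hn,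
    Nat.factorization_mul hm hn, Finsupp.prod_add_index_of_disjoint]
  simpa only [Nat.support_factorization] using hmn.disjoint_primeFactors

theorem ofFun_factorization_prod_apply_prime_pow [CommMonoidWithZero R] {g : ℕ → R}
    (hg : g 1 = 1) {p : ℕ} (hp : p.Prime) (k : ℕ) :
    (ofFun fun n => n.factorization.prod fun p k => g (p ^ k)) (p ^ k) = g (p ^ k) := by
  rw [ofFun_apply _ (pow_ne_zero k hp.ne_zero), hp.factorization_pow]
  exact Finsupp.prod_single_index (by simpa using hg)

theorem IsMultiplicative.of_mul_eq_one [CommSemiring R] {f g : ArithmeticFunction R}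
    (hf : f.IsMultiplicative) (hfg : f * g = 1) : g.IsMultiplicative := by
  have hg1 : g 1 = 1 := by simpa [hf.map_one] using congr($hfg 1)
  -- the multiplicative function agreeing with `g` on prime powers is also a right inverse of `f`
  set g' := ofFun fun n => n.factorization.prod fun p k => g (p ^ k)
  have hg' := isMultiplicative_ofFun_factorization_prod (fun n => g n)
  have hfg' : f * g' = 1 := by
    refine (eq_iff_eq_on_prime_powers _ (hf.mul hg') _ isMultiplicative_one).mpr fun p k hp => ?_
    rw [← hfg, mul_apply_prime_pow _ _ hp, mul_apply_prime_pow _ _ hp]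
    simp only [ofFun_factorization_prod_apply_prime_pow hg1 hp]
  have hgf : g * f = 1 := by rw [mul_comm, hfg]
  rwa [left_inv_eq_right_inv hgf hfg']

theorem abs_apply_prime_pow_le_of_mul_eq_one {f g : ArithmeticFunction ℝ} (hfg : f * g = 1)
    (hf1 : f 1 = 1) {C γ : ℝ} (hC : 0 ≤ C) (hf : ∀ n, 2 ≤ n → |f n| ≤ C * (n : ℝ) ^ γ)
    {p : ℕ} (hp : p.Prime) (k : ℕ) : |g (p ^ k)| ≤ ((p : ℝ) ^ γ * (1 + C)) ^ k := by
  have hg1 : g 1 = 1 := by simpa [hf1] using congr($hfg 1)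
  refine abs_le_pow_of_sum_mul_eq_zero (a := fun i => f (p ^ i)) (w := fun j => g (p ^ j)) hC
    (by positivity) (by simpa using hf1) (fun i hi => ?_) (by simp [hg1]) (fun i hi => ?_) k
  · have := hf (p ^ i) (hp.two_le.trans (Nat.le_self_pow hi p))
    rwa [Nat.cast_pow, ← Real.rpow_pow_comm (Nat.cast_nonneg p)] at this
  · rw [← mul_apply_prime_pow _ _ hp, hfg, one_apply_ne (by simp [hp.ne_one, hi])]

theorem IsMultiplicative.abs_le_rpow {g : ArithmeticFunction ℝ} (hg : g.IsMultiplicative) {s : ℝ}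
    (h : ∀ p k, p.Prime → |g (p ^ k)| ≤ ((p : ℝ) ^ s) ^ k) {n : ℕ} (hn : n ≠ 0) :
    |g n| ≤ (n : ℝ) ^ s := by
  rw [IsMultiplicative.multiplicative_factorization g hg hn, Finsupp.prod, abs_prod]
  calc ∏ p ∈ n.factorization.support, |g (p ^ n.factorization p)|
      ≤ ∏ p ∈ n.factorization.support, ((p : ℝ) ^ s) ^ n.factorization p :=
        prod_le_prod (fun _ _ => abs_nonneg _) fun p hp =>
          h _ _ (Nat.prime_of_mem_primeFactors (by simpa using hp))
    _ = (n : ℝ) ^ s := by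
        simp_rw [Real.rpow_pow_comm (Nat.cast_nonneg _)]
        rw [Real.finsetProd_rpow _ _ fun _ _ => by positivity]
        exact_mod_cast congr(($(Nat.prod_factorization_pow_eq_self hn) : ℝ) ^ s)

end ArithmeticFunction

theorem stmt8 (f g : ℕ → ℝ) (hf1 : f 1 = 1)
    (hmult : ∀ m n : ℕ, 0 < m → 0 < n → Nat.Coprime m n → f (m * n) = f m * f n)
    (hginv : ∀ n : ℕ, 0 < n →
      ∑ d ∈ n.divisors, f (n / d) * g d = if n = 1 then 1 else 0)
    (C : ℝ) (hC : 0 < C) (γ : ℝ)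
    (hf : ∀ n : ℕ, 2 ≤ n → |f n| ≤ C * (n : ℝ) ^ γ) :
    ∀ n : ℕ, 2 ≤ n →
      |g n| ≤ (n : ℝ) ^ (γ + Real.log (1 + C) / Real.log 2) := by
  have hF : (ofFun f).IsMultiplicative := by
    refine IsMultiplicative.iff_ne_zero.mpr ⟨by rw [ofFun_apply _ one_ne_zero, hf1], ?_⟩
    intro m n hm hn hmn
    rw [ofFun_apply _ (mul_ne_zero hm hn), ofFun_apply _ hm, ofFun_apply _ hn]
    exact hmult m n (Nat.pos_of_ne_zero hm) (Nat.pos_of_ne_zero hn) hmn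
  have hFG : ofFun f * ofFun g = 1 := by
    ext n
    rcases eq_or_ne n 0 with rfl | hn
    · simp
    rw [ofFun_mul_ofFun_apply _ _ hn, hginv n (Nat.pos_of_ne_zero hn), one_apply]
  have hF_le : ∀ m, 2 ≤ m → |ofFun f m| ≤ C * (m : ℝ) ^ γ := fun m hm => by
    rw [ofFun_apply _ (by omega)]
    exact hf m hm
  have hG_prime_pow : ∀ p k, p.Prime →
      |ofFun g (p ^ k)| ≤ ((p : ℝ) ^ (γ + Real.log (1 + C) / Real.log 2)) ^ k := by
    intro p k hp
    refine (abs_apply_prime_pow_le_of_mul_eq_one hFG hF.map_one hC.le hF_le hp k).trans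
      (pow_le_pow_left₀ (by positivity) ?_ k)
    rw [Real.rpow_add (by exact_mod_cast hp.pos), Real.log_div_log]
    exact mul_le_mul_of_nonneg_left
      (Real.le_rpow_logb_two (by linarith) (by exact_mod_cast hp.two_le)) (by positivity)
  intro n hn
  have hn0 : n ≠ 0 := by omega
  simpa only [ofFun_apply _ hn0] using (hF.of_mul_eq_one hFG).abs_le_rpow hG_prime_pow hn0
end

section
/- Let f : ℕ → ℝ be an arithmetic function with f(1) = 1. Assume there exist A > 0 and c > 1 such that |f(n)| ≤ A c^n for all n ≥ 2, and let υ > 1 be the real number satisfying ζ(υ) = 1/(A c²) + 1, where ζ is the Riemann zeta function. Then for all n ≥ 2, the Dirichlet inverse satisfies |f⁻¹(n)| ≤ A c^n + (Ω(n) − 1) · A · n^υ · c^{n/2} / 2^υ. -/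
/-!
Comparing coefficients in `f * g = ε` gives `g n = -∑ f (n / d) * g d` over the proper divisors
`d` of `n`, and the term `d = 1` is `f n`. Argue by strong induction. For every other proper
divisor `d`, with `e = n / d ≥ 2`, the bound `A c^e` for `f e` times the inductive bound for `g d`
is at most `Ω(d) · A c² · A (n/2)^υ c^(n/2) · e^(-υ)`, because `d + e ≤ 2 + de/2`. As
`Ω(d) ≤ Ω(n) - 1` and `∑_{1 < e ∣ n} e^(-υ) ≤ ζ(υ) - 1 = 1/(A c²)`, these terms add up to at most
`(Ω(n) - 1) A (n/2)^υ c^(n/2)`.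
-/

open Finset Real

lemma mul_add_rpow_le {A c υ ω x y : ℝ} (hc : 1 ≤ c) (hυ : 0 ≤ υ)
    (hx : 2 ≤ x) (hy : 2 ≤ y) (hω : 1 ≤ ω) :
    A * c ^ y * (A * c ^ x + (ω - 1) * A * x ^ υ * c ^ (x / 2) / 2 ^ υ) ≤
      ω * (A * c ^ 2) * (A * (x * y) ^ υ * c ^ (x * y / 2) / 2 ^ υ) * y ^ (-υ) := by
  have hc0 : 0 < c := by linarith
  have hcpow : ∀ s, s ≤ 2 + x * y / 2 → c ^ s ≤ c ^ 2 * c ^ (x * y / 2) := fun s hs => by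
    rw [← rpow_two, ← rpow_add hc0]
    exact rpow_le_rpow_of_exponent_le hc hs
  -- both exponent bounds reduce to `(x - 2) * (y - 2) ≥ 0`
  have hxy : 0 ≤ (x - 2) * (y - 2) := mul_nonneg (by linarith) (by linarith)
  have h₁ : c ^ y * c ^ x ≤ c ^ 2 * c ^ (x * y / 2) := by
    rw [← rpow_add hc0]; exact hcpow _ (by nlinarith)
  have h₂ : c ^ y * c ^ (x / 2) ≤ c ^ 2 * c ^ (x * y / 2) := by
    rw [← rpow_add hc0]; exact hcpow _ (by nlinarith)
  have hhalf : x ^ υ / 2 ^ υ = (x / 2) ^ υ := (div_rpow (by linarith) zero_le_two υ).symm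
  have hone : 1 ≤ (x / 2) ^ υ := one_le_rpow (by linarith) hυ
  have hrhs : (x * y) ^ υ * y ^ (-υ) = x ^ υ := by
    rw [mul_rpow (by linarith) (by linarith), mul_assoc, ← rpow_add (by linarith), add_neg_cancel,
      rpow_zero, mul_one]
  calc A * c ^ y * (A * c ^ x + (ω - 1) * A * x ^ υ * c ^ (x / 2) / 2 ^ υ)
      = A ^ 2 * (c ^ y * c ^ x) + (ω - 1) * A ^ 2 * (c ^ y * c ^ (x / 2)) * (x ^ υ / 2 ^ υ) := by
        ring
    _ ≤ A ^ 2 * (c ^ 2 * c ^ (x * y / 2) * (x / 2) ^ υ)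
        + (ω - 1) * A ^ 2 * (c ^ 2 * c ^ (x * y / 2)) * (x / 2) ^ υ := by
        rw [hhalf]
        have hω' : 0 ≤ ω - 1 := by linarith
        gcongr _ * ?_ + _ * ?_ * _
        exact h₁.trans (le_mul_of_one_le_right (by positivity) hone)
    _ = ω * (A * c ^ 2) * (A * ((x * y) ^ υ * y ^ (-υ)) * c ^ (x * y / 2) / 2 ^ υ) := by
        rw [hrhs, ← hhalf]; ring
    _ = ω * (A * c ^ 2) * (A * (x * y) ^ υ * c ^ (x * y / 2) / 2 ^ υ) * y ^ (-υ) := by ring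

lemma sum_apply_div_le_tsum_sub_apply_one {φ : ℕ → ℝ} (hφ : ∀ m, 0 ≤ φ m) (hs : Summable φ)
    {n : ℕ} {s : Finset ℕ} (hsn : s ⊆ n.properDivisors) :
    ∑ d ∈ s, φ (n / d) ≤ ∑' m, φ m - φ 1 := by
  have hmem : ∀ d ∈ s, d ∣ n ∧ d < n := fun d hd => Nat.mem_properDivisors.mp (hsn hd)
  have hinj : Set.InjOn (n / ·) s := fun d hd d' hd' h => by
    have hn : n ≠ 0 := by have := (hmem d hd).2; omega
    rw [← Nat.div_div_self (hmem d hd).1 hn, ← Nat.div_div_self (hmem d' hd').1 hn]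
    exact congrArg (n / ·) h
  have h1 : 1 ∉ s.image (n / ·) := by
    simp only [mem_image, not_exists, not_and]
    intro d hd h
    exact (hmem d hd).2.ne (Nat.eq_of_dvd_of_div_eq_one (hmem d hd).1 h)
  rw [← sum_image hinj, le_sub_iff_add_le', ← sum_insert h1]
  exact hs.sum_le_tsum _ fun m _ => hφ m

def IsDirichletInverse {R : Type*} [CommRing R] (f g : ℕ → R) : Prop :=
  ∀ n : ℕ, 0 < n → ∑ d ∈ n.divisors, f (n / d) * g d = if n = 1 then 1 else 0

namespace IsDirichletInverse

variable {R : Type*} [CommRing R] {f g : ℕ → R}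

lemma apply_one (h : IsDirichletInverse f g) (hf1 : f 1 = 1) : g 1 = 1 := by
  simpa [hf1] using h 1 one_pos

lemma eq_neg_sum (h : IsDirichletInverse f g) (hf1 : f 1 = 1) {n : ℕ} (hn : 1 < n) :
    g n = -∑ d ∈ n.properDivisors, f (n / d) * g d := by
  have := h n (by omega)
  rw [← Nat.insert_self_properDivisors (by omega), sum_insert Nat.self_notMem_properDivisors,
    Nat.div_self (by omega), hf1, one_mul, if_neg hn.ne'] at this
  exact eq_neg_of_add_eq_zero_left this

lemma abs_le [LinearOrder R] [IsStrictOrderedRing R] (h : IsDirichletInverse f g) (hf1 : f 1 = 1)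
    {n : ℕ} (hn : 1 < n) :
    |g n| ≤ |f n| + ∑ d ∈ n.properDivisors.erase 1, |f (n / d)| * |g d| := by
  rw [h.eq_neg_sum hf1 hn, abs_neg,
    ← add_sum_erase _ _ (Nat.one_mem_properDivisors_iff_one_lt.mpr hn), Nat.div_one,
    h.apply_one hf1, mul_one]
  refine (abs_add_le _ _).trans (add_le_add_right ((abs_sum_le_sum_abs _ _).trans_eq ?_) _)
  simp only [abs_mul]

end IsDirichletInverse

noncomputable def dirichletInverseBound (A c υ : ℝ) (n : ℕ) : ℝ :=
  A * c ^ n + ((n.primeFactorsList.length : ℝ) - 1) * A * (n : ℝ) ^ υ *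
    c ^ ((n : ℝ) / 2) / (2 : ℝ) ^ υ

open ArithmeticFunction in
lemma abs_mul_le_of_mem_properDivisors {f g : ℕ → ℝ} {A c υ : ℝ} (hA : 0 ≤ A) (hc : 1 ≤ c)
    (hυ : 0 ≤ υ) (hf : ∀ n : ℕ, 2 ≤ n → |f n| ≤ A * c ^ n) {n d : ℕ}
    (hd : d ∈ n.properDivisors.erase 1)
    (ih : ∀ m < n, 2 ≤ m → |g m| ≤ dirichletInverseBound A c υ m) :
    |f (n / d)| * |g d| ≤ ((n.primeFactorsList.length : ℝ) - 1) * (A * c ^ 2) *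
      (A * (n : ℝ) ^ υ * c ^ ((n : ℝ) / 2) / 2 ^ υ) * ((n / d : ℕ) : ℝ) ^ (-υ) := by
  obtain ⟨hd1, ⟨e, rfl⟩, hdn⟩ : d ≠ 1 ∧ d ∣ n ∧ d < n := by
    simpa [Nat.mem_properDivisors] using hd
  have hd2 : 2 ≤ d := by by_contra! h; interval_cases d <;> simp_all
  have he2 : 2 ≤ e := by by_contra! h; interval_cases e <;> simp_all
  have hΩ : (d.primeFactorsList.length : ℝ) ≤ ((d * e).primeFactorsList.length : ℝ) - 1 := by
    have he : cardFactors e ≠ 0 := by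
      rw [Ne, cardFactors_eq_zero_iff_eq_zero_or_one]; omega
    rw [← cardFactors_apply, ← cardFactors_apply, cardFactors_mul (by omega) (by omega),
      le_sub_iff_add_le]
    exact_mod_cast Nat.add_le_add_left (Nat.one_le_iff_ne_zero.mpr he) _
  have hΩd : (1 : ℝ) ≤ d.primeFactorsList.length := by
    rw [← cardFactors_apply, Nat.one_le_cast, Nat.one_le_iff_ne_zero, Ne,
      cardFactors_eq_zero_iff_eq_zero_or_one]
    omega
  rw [Nat.mul_div_cancel_left e (by omega)]
  have hfe := hf e he2
  have key := mul_add_rpow_le (A := A) (υ := υ) (x := d) (y := e) hc hυ (by exact_mod_cast hd2)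
    (by exact_mod_cast he2) hΩd
  rw [rpow_natCast, rpow_natCast] at key
  push_cast
  calc |f e| * |g d| ≤ A * c ^ e * dirichletInverseBound A c υ d :=
        mul_le_mul hfe (ih d hdn hd2) (abs_nonneg _) ((abs_nonneg _).trans hfe)
    _ ≤ _ := key
    _ ≤ _ := by gcongr

theorem abs_le_dirichletInverseBound {f g : ℕ → ℝ} (hf1 : f 1 = 1) (hg : IsDirichletInverse f g)
    {A c υ : ℝ} (hA : 0 < A) (hc : 1 ≤ c) (hf : ∀ n : ℕ, 2 ≤ n → |f n| ≤ A * c ^ n) (hυ : 1 < υ)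
    (hzeta : ∑' m : ℕ, (m : ℝ) ^ (-υ) = 1 / (A * c ^ 2) + 1) :
    ∀ n : ℕ, 2 ≤ n → |g n| ≤ dirichletInverseBound A c υ n := by
  intro n
  induction n using Nat.strong_induction_on with
  | _ n ih =>
  intro hn
  have htail : ∑ d ∈ n.properDivisors.erase 1, ((n / d : ℕ) : ℝ) ^ (-υ) ≤ 1 / (A * c ^ 2) := by
    have := sum_apply_div_le_tsum_sub_apply_one (fun m => rpow_nonneg (Nat.cast_nonneg m) (-υ))
      (summable_nat_rpow.mpr (by linarith)) (erase_subset 1 n.properDivisors)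
    rwa [hzeta, Nat.cast_one, one_rpow, add_sub_cancel_right] at this
  have hΩ : (0 : ℝ) ≤ (n.primeFactorsList.length : ℝ) - 1 := by
    rw [sub_nonneg, Nat.one_le_cast, Nat.one_le_iff_ne_zero, Ne, List.length_eq_zero_iff,
      Nat.primeFactorsList_eq_nil]
    omega
  calc |g n| ≤ |f n| + ∑ d ∈ n.properDivisors.erase 1, |f (n / d)| * |g d| := hg.abs_le hf1 hn
    _ ≤ A * c ^ n + ∑ d ∈ n.properDivisors.erase 1,
          ((n.primeFactorsList.length : ℝ) - 1) * (A * c ^ 2) *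
            (A * (n : ℝ) ^ υ * c ^ ((n : ℝ) / 2) / 2 ^ υ) * ((n / d : ℕ) : ℝ) ^ (-υ) :=
        add_le_add (hf n hn) (sum_le_sum fun d hd =>
          abs_mul_le_of_mem_properDivisors hA.le hc (by linarith) hf hd ih)
    _ ≤ A * c ^ n + ((n.primeFactorsList.length : ℝ) - 1) * (A * c ^ 2) *
            (A * (n : ℝ) ^ υ * c ^ ((n : ℝ) / 2) / 2 ^ υ) * (1 / (A * c ^ 2)) := by
        rw [← mul_sum]
        gcongr
    _ = dirichletInverseBound A c υ n := by
        unfold dirichletInverseBound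
        field_simp

theorem stmt16 (f g : ℕ → ℝ) (hf1 : f 1 = 1)
    (hginv : ∀ n : ℕ, 0 < n →
      ∑ d ∈ n.divisors, f (n / d) * g d = if n = 1 then 1 else 0)
    (A c : ℝ) (hA : 0 < A) (hc : 1 < c)
    (hf : ∀ n : ℕ, 2 ≤ n → |f n| ≤ A * c ^ n)
    (υ : ℝ) (hυ : 1 < υ)
    (hzeta : ∑' m : ℕ, (m : ℝ) ^ (-υ) = 1 / (A * c ^ 2) + 1) :
    ∀ n : ℕ, 2 ≤ n →
      |g n| ≤ A * c ^ n +
        ((n.primeFactorsList.length : ℝ) - 1) * A * (n : ℝ) ^ υ *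
          c ^ ((n : ℝ) / 2) / (2 : ℝ) ^ υ :=
  abs_le_dirichletInverseBound hf1 hginv hA hc.le hf hυ hzeta
end
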